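/- arXiv:1705.06826 — 2 statements merged into one kernel-verified Lean document; each statement's English description precedes it below -/
import Mathlib

section
/- For a fixed sequence s of length ℓ over an alphabet of size k, the number of sequences of length n over the same alphabet that contain s as a subsequence equals the sum over j from ℓ to n of (n choose j)·(k-1)^(n-j). -/
open scoped Classical
open Finset

lemma myIccSum (m n : ℕ) (f : ℕ → ℕ) :
    ∑ j ∈ Icc m n, f j = ∑ i ∈ range (n + 1 - m), f (m + i) := by
  rw [← Finset.Ico_add_one_right_eq_Icc, Finset.sum_Ico_eq_sum_range]

lemma binom (q n : ℕ) : ∑ j ∈ Icc 0 n, n.choose j * q ^ (n - j) = (q + 1) ^ n := by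
  rw [myIccSum, add_comm q 1, add_pow]
  simp [mul_comm]

lemma rhs_rec (q m n : ℕ) (h : m ≤ n) :
    ∑ j ∈ Icc (m + 1) (n + 1), (n + 1).choose j * q ^ (n + 1 - j)
      = ∑ j ∈ Icc m n, n.choose j * q ^ (n - j)
        + q * ∑ j ∈ Icc (m + 1) n, n.choose j * q ^ (n - j) := by
  rw [myIccSum, myIccSum, myIccSum, Finset.mul_sum]
  have h1 : n + 1 + 1 - (m + 1) = n + 1 - m := by omega
  have h2 : n + 1 - (m + 1) = n - m := by omega
  rw [h1, h2]
  have key : ∀ i ∈ range (n + 1 - m),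
      (n + 1).choose (m + 1 + i) * q ^ (n + 1 - (m + 1 + i))
        = n.choose (m + i) * q ^ (n - (m + i)) + n.choose (m + i + 1) * q ^ (n - (m + i)) := by
    intro i _
    have : m + 1 + i = (m + i) + 1 := by omega
    rw [this, Nat.choose_succ_succ, add_mul]
    congr 2 <;> congr 1 <;> omega
  rw [Finset.sum_congr rfl key, Finset.sum_add_distrib]
  congr 1
  have hnm : n + 1 - m = (n - m) + 1 := by omega
  rw [hnm, Finset.sum_range_succ]
  have : n.choose (m + (n - m) + 1) = 0 := by
    apply Nat.choose_eq_zero_of_lt; omega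
  rw [this, zero_mul, add_zero]
  refine Finset.sum_congr rfl fun i hi => ?_
  rw [Finset.mem_range] at hi
  have e1 : n - (m + i) = (n - (m + 1 + i)) + 1 := by omega
  have e2 : m + i + 1 = m + 1 + i := by omega
  rw [e1, e2, pow_succ]
  ring

lemma sublist_cons_ne {k : ℕ} {c x : Fin k} {t l : List (Fin k)} (h : x ≠ c) :
    (c :: t).Sublist (x :: l) ↔ (c :: t).Sublist l := by
  constructor
  · intro hs
    cases hs with
    | cons _ hs => exact hs
    | cons_cons => exact absurd rfl h
  · intro hs; exact hs.cons x

lemma card_step {k n : ℕ} (P : List (Fin k) → Prop) [DecidablePred P] :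
    (univ.filter (fun a : Fin (n + 1) → Fin k => P (List.ofFn a))).card =
      ∑ x : Fin k, (univ.filter (fun b : Fin n → Fin k => P (x :: List.ofFn b))).card := by
  rw [Finset.card_eq_sum_card_fiberwise (f := fun a => a 0) (t := univ) (fun _ _ => mem_univ _)]
  refine Finset.sum_congr rfl fun x _ => ?_
  refine Finset.card_bij' (fun a _ => fun i => a i.succ) (fun b _ => Fin.cons x b) ?_ ?_ ?_ ?_
  · intro a ha
    simp only [Finset.mem_filter, Finset.mem_univ, true_and] at ha ⊢
    obtain ⟨hP, h0⟩ := ha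
    rw [List.ofFn_succ] at hP
    rwa [h0] at hP
  · intro b hb
    simp only [Finset.mem_filter, Finset.mem_univ, true_and] at hb ⊢
    refine ⟨?_, Fin.cons_zero _ _⟩
    rw [List.ofFn_succ]
    simpa using hb
  · intro a ha
    simp only [Finset.mem_filter] at ha
    funext i
    refine Fin.cases ?_ ?_ i
    · simp [ha.2.symm]
    · intro j; simp [Fin.cons_succ]
  · intro b _
    funext i
    simp [Fin.cons_succ]

lemma key (k : ℕ) (hk : 1 ≤ k) : ∀ n (s : List (Fin k)),
    (Finset.univ.filter (fun a : Fin n → Fin k => s.Sublist (List.ofFn a))).card =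
      ∑ j ∈ Finset.Icc s.length n, n.choose j * (k - 1) ^ (n - j) := by
  intro n
  induction n with
  | zero =>
    intro s
    cases s with
    | nil => simp
    | cons c t => simp [List.ofFn_zero]
  | succ n ih =>
    intro s
    cases s with
    | nil =>
      simp only [List.nil_sublist, Finset.filter_true, List.length_nil]
      rw [Finset.card_univ, binom]
      have : k - 1 + 1 = k := by omega
      rw [this]
      simp
    | cons c t =>
      by_cases hlen : t.length ≤ n
      · rw [card_step (fun l => (c :: t).Sublist l)]
        rw [← Finset.add_sum_erase _ _ (Finset.mem_univ c)]
        have hc : (univ.filter (fun b : Fin n → Fin k => (c :: t).Sublist (c :: List.ofFn b))).card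
            = ∑ j ∈ Finset.Icc t.length n, n.choose j * (k - 1) ^ (n - j) := by
          rw [← ih t]
          congr 1
          apply Finset.filter_congr
          intro b _
          simp [List.cons_sublist_cons]
        have hne : ∀ x ∈ univ.erase c,
            (univ.filter (fun b : Fin n → Fin k => (c :: t).Sublist (x :: List.ofFn b))).card
              = ∑ j ∈ Finset.Icc (t.length + 1) n, n.choose j * (k - 1) ^ (n - j) := by
          intro x hx
          rw [Finset.mem_erase] at hx
          have hih := ih (c :: t)
          simp only [List.length_cons] at hih
          rw [← hih]
          congr 1
          apply Finset.filter_congr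
          intro b _
          simp [sublist_cons_ne hx.1]
        rw [hc, Finset.sum_congr rfl hne, Finset.sum_const, Finset.card_erase_of_mem (mem_univ c),
          Finset.card_univ, Fintype.card_fin, smul_eq_mul]
        rw [List.length_cons]
        exact (rhs_rec (k - 1) t.length n hlen).symm
      · have h1 : (univ.filter (fun a : Fin (n+1) → Fin k => (c :: t).Sublist (List.ofFn a))) = ∅ := by
          apply Finset.filter_false_of_mem
          intro a _
          intro hsub
          have := hsub.length_le
          simp at this
          omega
        rw [h1]
        have h2 : Finset.Icc (c :: t).length (n + 1) = ∅ := by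
          apply Finset.Icc_eq_empty
          simp only [List.length_cons]
          omega
        rw [h2]
        simp

theorem stmt0 (k n ℓ : ℕ) (hk : 1 ≤ k) (s : List (Fin k)) (hs : s.length = ℓ)
    (hln : ℓ ≤ n) :
    (Finset.univ.filter (fun a : Fin n → Fin k => s.Sublist (List.ofFn a))).card =
      ∑ j ∈ Finset.Icc ℓ n, n.choose j * (k - 1) ^ (n - j) := by
  subst hs
  exact key k hk n s
end

section
/- For k ≥ 2, m ≥ 1 and θ = ℓ/n with 1/k ≤ θ < 1, the proportion h_k^{(n)}(θ) of m-tuples of length-n sequences over a k-letter alphabet with longest common subsequence of length at least ℓ = θn satisfies h_k^{(n)}(θ) ≤ k^{ℓ - mn} · (n · (n choose ℓ) · (k-1)^{n-ℓ})^m. -/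
open scoped Classical

/-- The length of the longest common subsequence of `m` lists. -/
noncomputable def LC {α : Type*} {m : ℕ} (as : Fin m → List α) : ℕ :=
  sSup {l | ∃ c : List α, c.length = l ∧ ∀ i, c.Sublist (as i)}




lemma lemA (k j : ℕ) (hj : j + 1 ≤ k) : k ^ j ≤ (j + 1) * (k - 1) ^ j := by
  have hk1 : k = (k - 1) + 1 := by omega
  calc k ^ j = ((k-1) + 1) ^ j := by rw [← hk1]
    _ = ∑ i ∈ Finset.range (j+1), (k-1)^i * 1 ^ (j - i) * (j.choose i) := add_pow _ _ _
    _ ≤ ∑ _i ∈ Finset.range (j+1), (k-1)^j := by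
        apply Finset.sum_le_sum
        intro i hi
        have hi' : i ≤ j := by simpa [Nat.lt_succ_iff] using hi
        have h1 : (j.choose i) ≤ (k-1)^(j-i) := by
          calc j.choose i = j.choose (j - i) := (Nat.choose_symm hi').symm
            _ ≤ j ^ (j - i) := Nat.choose_le_pow _ _
            _ ≤ (k-1) ^ (j-i) := Nat.pow_le_pow_left (by omega) _
        calc (k-1)^i * 1 ^ (j - i) * (j.choose i) ≤ (k-1)^i * 1 * ((k-1)^(j-i)) := by
              rw [one_pow]; exact Nat.mul_le_mul_left _ h1
          _ = (k-1)^j := by rw [mul_one, ← pow_add]; congr 1; omega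
    _ = (j+1) * (k-1)^j := by rw [Finset.sum_const, Finset.card_range, smul_eq_mul]

lemma lemB (j a r : ℕ) : (j + 1) * Nat.choose a r ≤ Nat.choose (a + j + 1) (r + 1) := by
  induction j with
  | zero =>
    simp only [Nat.zero_add, Nat.one_mul, Nat.add_zero]
    rw [Nat.choose_succ_succ]
    exact Nat.le_add_right _ _
  | succ j ih =>
    have h2 : Nat.choose a r ≤ Nat.choose (a + j + 1) r := Nat.choose_le_choose _ (by omega)
    calc (j + 2) * Nat.choose a r = (j+1) * Nat.choose a r + Nat.choose a r := by ring
      _ ≤ Nat.choose (a + j + 1) (r + 1) + Nat.choose (a + j + 1) r := Nat.add_le_add ih h2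
      _ = Nat.choose (a + j + 2) (r + 1) := by
          have := Nat.choose_succ_succ (a + j + 1) r
          simp only [Nat.succ_eq_add_one, show a + j + 1 + 1 = a + j + 2 from rfl] at this
          omega

lemma lemC (k b r : ℕ) (hk : 2 ≤ k) (h : b + 1 ≤ k * r) :
    k * Nat.choose b r ≤ (k - 1) * Nat.choose (b + 1) r := by
  rcases le_or_gt r b with hr | hr
  · have key : (b + 1) * Nat.choose b r = (b + 1 - r) * Nat.choose (b + 1) r := by
      have h1 : (b + 1) * Nat.choose b r = Nat.choose (b + 1) (r + 1) * (r + 1) :=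
        Nat.add_one_mul_choose_eq b r
      have h2 : Nat.choose (b + 1) (r + 1) * (r + 1) = Nat.choose (b + 1) r * ((b + 1) - r) :=
        Nat.choose_succ_right_eq (b + 1) r
      rw [h1, h2, Nat.mul_comm]
    have hpos : 0 < b + 1 := Nat.succ_pos b
    apply Nat.le_of_mul_le_mul_left _ hpos
    have hineq : k * (b + 1 - r) ≤ (k - 1) * (b + 1) := by
      obtain ⟨t, ht⟩ : ∃ t, b + 1 = t + r := ⟨b + 1 - r, by omega⟩
      rw [ht, Nat.add_sub_cancel]
      have expand : (k - 1) * (t + r) + (t + r) = k * t + k * r := by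
        have : (k - 1) * (t + r) + 1 * (t + r) = k * (t + r) := by
          rw [← Nat.add_mul]; congr 1; omega
        rw [Nat.one_mul] at this
        rw [this, Nat.mul_add]
      have : k * t + (t + r) ≤ k * t + k * r := by
        have htr : t + r ≤ k * r := ht ▸ h
        omega
      omega
    calc (b + 1) * (k * Nat.choose b r) = k * ((b + 1) * Nat.choose b r) := by ring
      _ = k * ((b + 1 - r) * Nat.choose (b + 1) r) := by rw [key]
      _ = (k * (b + 1 - r)) * Nat.choose (b + 1) r := by ring
      _ ≤ ((k - 1) * (b + 1)) * Nat.choose (b + 1) r :=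
          Nat.mul_le_mul_right _ hineq
      _ = (b + 1) * ((k - 1) * Nat.choose (b + 1) r) := by ring
  · rw [Nat.choose_eq_zero_of_lt hr, Nat.mul_zero]
    exact Nat.zero_le _

lemma lemD (k r d : ℕ) (hk : 2 ≤ k) (hn : r + 1 + d ≤ k * (r + 1)) :
    ∀ j, j ≤ d → Nat.choose (r + d - j) r * k ^ j ≤ Nat.choose (r + 1 + d) (r + 1) * (k - 1) ^ j := by
  have hn' : r + 1 + d ≤ k * r + k := by
    have : k * (r + 1) = k * r + k := by rw [Nat.mul_add, Nat.mul_one]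
    omega
  intro j
  induction j using Nat.strong_induction_on with
  | _ j ihj =>
    intro hj
    rcases le_or_gt (j + 1) k with hjk | hjk
    · -- direct case
      have e1 : k ^ j ≤ (j + 1) * (k - 1) ^ j := lemA k j hjk
      calc Nat.choose (r + d - j) r * k ^ j
          ≤ Nat.choose (r + d - j) r * ((j + 1) * (k - 1) ^ j) :=
            Nat.mul_le_mul_left _ e1
        _ = ((j + 1) * Nat.choose (r + d - j) r) * (k - 1) ^ j := by ring
        _ ≤ Nat.choose ((r + d - j) + j + 1) (r + 1) * (k - 1) ^ j :=
            Nat.mul_le_mul_right _ (lemB j (r + d - j) r)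
        _ = Nat.choose (r + 1 + d) (r + 1) * (k - 1) ^ j := by
            congr 2; omega
    · -- inductive case, j ≥ k ≥ 2 so j = j' + 1
      obtain ⟨j', rfl⟩ : ∃ j', j = j' + 1 := ⟨j - 1, by omega⟩
      have hj' : j' ≤ d := by omega
      have hb : (r + d - (j' + 1)) + 1 = r + d - j' := by omega
      have hcond : (r + d - (j' + 1)) + 1 ≤ k * r := by omega
      have step := lemC k (r + d - (j' + 1)) r hk hcond
      rw [hb] at step
      calc Nat.choose (r + d - (j' + 1)) r * k ^ (j' + 1)
          = (k * Nat.choose (r + d - (j' + 1)) r) * k ^ j' := by ring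
        _ ≤ ((k - 1) * Nat.choose (r + d - j') r) * k ^ j' :=
            Nat.mul_le_mul_right _ step
        _ = (k - 1) * (Nat.choose (r + d - j') r * k ^ j') := by ring
        _ ≤ (k - 1) * (Nat.choose (r + 1 + d) (r + 1) * (k - 1) ^ j') :=
            Nat.mul_le_mul_left _ (ihj j' (by omega) hj')
        _ = Nat.choose (r + 1 + d) (r + 1) * (k - 1) ^ (j' + 1) := by ring

def SS (k : ℕ) : ℕ → ℕ → ℕ
  | _, 0 => 1
  | 0, d + 1 => k ^ (d + 1) + (k - 1) * SS k 0 d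
  | r + 1, d + 1 => SS k r (d + 1) + (k - 1) * SS k (r + 1) d

lemma SS_le_sum (k : ℕ) :
    ∀ d r, SS k r d ≤ ∑ j ∈ Finset.range (d + 1),
      Nat.choose (r + d - j) r * (k - 1) ^ (d - j) * k ^ j := by
  intro d
  induction d with
  | zero => intro r; simp [SS]
  | succ d ihd =>
    intro r
    induction r with
    | zero =>
      have expand : SS k 0 (d + 1) = k ^ (d + 1) + (k - 1) * SS k 0 d := by simp [SS]
      rw [expand]
      have h1 : (k - 1) * SS k 0 d ≤
          ∑ j ∈ Finset.range (d + 1), (k - 1) ^ (d + 1 - j) * k ^ j := by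
        calc (k - 1) * SS k 0 d
            ≤ (k - 1) * ∑ j ∈ Finset.range (d + 1),
                Nat.choose (0 + d - j) 0 * (k - 1) ^ (d - j) * k ^ j :=
              Nat.mul_le_mul_left _ (ihd 0)
          _ = ∑ j ∈ Finset.range (d + 1), (k - 1) ^ (d + 1 - j) * k ^ j := by
              rw [Finset.mul_sum]
              apply Finset.sum_congr rfl
              intro j hj
              have hjd : j ≤ d := by simpa [Nat.lt_succ_iff] using hj
              rw [Nat.choose_zero_right, Nat.one_mul, ← Nat.mul_assoc,
                show d + 1 - j = (d - j) + 1 by omega, pow_succ, Nat.mul_comm ((k-1)^(d-j)) (k-1)]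
      have e : ∑ j ∈ Finset.range (d + 2),
            Nat.choose (0 + (d + 1) - j) 0 * (k - 1) ^ (d + 1 - j) * k ^ j
          = (∑ j ∈ Finset.range (d + 1), (k - 1) ^ (d + 1 - j) * k ^ j) + k ^ (d + 1) := by
        rw [Finset.sum_range_succ]
        congr 1
        · apply Finset.sum_congr rfl
          intro j _
          rw [Nat.choose_zero_right, Nat.one_mul]
        · rw [Nat.choose_zero_right, Nat.one_mul, Nat.sub_self, pow_zero, Nat.one_mul]
      rw [e]
      omega
    | succ r ihr =>
      have expand : SS k (r + 1) (d + 1) = SS k r (d + 1) + (k - 1) * SS k (r + 1) d := by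
        simp [SS]
      rw [expand]
      have h2 : (k - 1) * SS k (r + 1) d ≤
          ∑ j ∈ Finset.range (d + 1),
            Nat.choose (r + 1 + d - j) (r + 1) * (k - 1) ^ (d + 1 - j) * k ^ j := by
        calc (k - 1) * SS k (r + 1) d
            ≤ (k - 1) * ∑ j ∈ Finset.range (d + 1),
                Nat.choose (r + 1 + d - j) (r + 1) * (k - 1) ^ (d - j) * k ^ j :=
              Nat.mul_le_mul_left _ (ihd (r + 1))
          _ = _ := by
              rw [Finset.mul_sum]
              apply Finset.sum_congr rfl
              intro j hj
              have hjd : j ≤ d := by simpa [Nat.lt_succ_iff] using hj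
              rw [show d + 1 - j = (d - j) + 1 by omega, pow_succ]
              ring
      have h1 : SS k r (d + 1) ≤
          (∑ j ∈ Finset.range (d + 1),
            Nat.choose (r + (d + 1) - j) r * (k - 1) ^ (d + 1 - j) * k ^ j) + k ^ (d + 1) := by
        refine le_trans ihr ?_
        rw [show d + 1 + 1 = (d + 1) + 1 from rfl, Finset.sum_range_succ]
        apply Nat.add_le_add_left
        rw [show r + (d + 1) - (d + 1) = r by omega, Nat.choose_self, Nat.sub_self, pow_zero,
          Nat.one_mul, Nat.one_mul]
      have e : ∑ j ∈ Finset.range (d + 2),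
            Nat.choose (r + 1 + (d + 1) - j) (r + 1) * (k - 1) ^ (d + 1 - j) * k ^ j
          = (∑ j ∈ Finset.range (d + 1),
              Nat.choose (r + (d + 1) - j) r * (k - 1) ^ (d + 1 - j) * k ^ j)
            + (∑ j ∈ Finset.range (d + 1),
              Nat.choose (r + 1 + d - j) (r + 1) * (k - 1) ^ (d + 1 - j) * k ^ j)
            + k ^ (d + 1) := by
        rw [Finset.sum_range_succ, ← Finset.sum_add_distrib]
        congr 1
        · apply Finset.sum_congr rfl
          intro j hj
          have hjd : j ≤ d := by simpa [Nat.lt_succ_iff] using hj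
          have hch : Nat.choose (r + (d + 1) - j) r + Nat.choose (r + 1 + d - j) (r + 1)
              = Nat.choose (r + 1 + (d + 1) - j) (r + 1) := by
            have h3 : r + 1 + (d + 1) - j = (r + (d + 1) - j) + 1 := by omega
            have h4 : r + 1 + d - j = r + (d + 1) - j := by omega
            rw [h3, h4, Nat.choose_succ_succ]
          rw [← hch, Nat.add_mul, Nat.add_mul]
        · rw [show r + 1 + (d + 1) - (d + 1) = r + 1 by omega, Nat.choose_self, Nat.sub_self,
            pow_zero, Nat.one_mul, Nat.one_mul]
      rw [e]
      omega

lemma SS_le (k r d : ℕ) (hk : 2 ≤ k) (hn : r + 1 + d ≤ k * (r + 1)) :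
    SS k r d ≤ (r + 1 + d) * Nat.choose (r + 1 + d) (r + 1) * (k - 1) ^ d := by
  calc SS k r d ≤ ∑ j ∈ Finset.range (d + 1),
        Nat.choose (r + d - j) r * (k - 1) ^ (d - j) * k ^ j := SS_le_sum k d r
    _ ≤ ∑ _j ∈ Finset.range (d + 1), Nat.choose (r + 1 + d) (r + 1) * (k - 1) ^ d := by
        apply Finset.sum_le_sum
        intro j hj
        have hjd : j ≤ d := by simpa [Nat.lt_succ_iff] using hj
        calc Nat.choose (r + d - j) r * (k - 1) ^ (d - j) * k ^ j
            = (k - 1) ^ (d - j) * (Nat.choose (r + d - j) r * k ^ j) := by ring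
          _ ≤ (k - 1) ^ (d - j) * (Nat.choose (r + 1 + d) (r + 1) * (k - 1) ^ j) :=
              Nat.mul_le_mul_left _ (lemD k r d hk hn j hjd)
          _ = Nat.choose (r + 1 + d) (r + 1) * ((k - 1) ^ (d - j) * (k - 1) ^ j) := by ring
          _ = Nat.choose (r + 1 + d) (r + 1) * (k - 1) ^ d := by
              rw [← pow_add, show d - j + j = d by omega]
    _ = (d + 1) * (Nat.choose (r + 1 + d) (r + 1) * (k - 1) ^ d) := by
        rw [Finset.sum_const, Finset.card_range, smul_eq_mul]
    _ ≤ (r + 1 + d) * (Nat.choose (r + 1 + d) (r + 1) * (k - 1) ^ d) :=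
        Nat.mul_le_mul_right _ (by omega)
    _ = (r + 1 + d) * Nat.choose (r + 1 + d) (r + 1) * (k - 1) ^ d := by ring

def T (k : ℕ) : ℕ → ℕ → ℕ
  | n, 0 => k ^ n
  | 0, _ + 1 => 0
  | n + 1, l + 1 => T k n l + (k - 1) * T k n (l + 1)

lemma T_eq_zero (k : ℕ) : ∀ n l, n < l → T k n l = 0 := by
  intro n
  induction n with
  | zero => intro l hl; obtain ⟨l', rfl⟩ : ∃ l', l = l' + 1 := ⟨l - 1, by omega⟩; simp [T]
  | succ n ih =>
    intro l hl
    obtain ⟨l', rfl⟩ : ∃ l', l = l' + 1 := ⟨l - 1, by omega⟩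
    have e : T k (n + 1) (l' + 1) = T k n l' + (k - 1) * T k n (l' + 1) := by simp [T]
    rw [e, ih l' (by omega), ih (l' + 1) (by omega)]
    simp

lemma T_diag (k : ℕ) : ∀ n, T k n n ≤ 1 := by
  intro n
  induction n with
  | zero => simp [T]
  | succ n ih =>
    have e : T k (n + 1) (n + 1) = T k n n + (k - 1) * T k n (n + 1) := by simp [T]
    rw [e, T_eq_zero k n (n + 1) (by omega)]
    simpa using ih

lemma T_le_SS (k : ℕ) : ∀ d r, T k (r + 1 + d) (r + 1) ≤ SS k r d := by
  intro d
  induction d with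
  | zero =>
    intro r
    have e : T k (r + 1) (r + 1) = T k r r + (k - 1) * T k r (r + 1) := by
      simp [show r + 1 + 0 = r + 1 from rfl, T]
    rw [show r + 1 + 0 = r + 1 from rfl, e, T_eq_zero k r (r + 1) (by omega)]
    simpa [SS] using T_diag k r
  | succ d ihd =>
    intro r
    induction r with
    | zero =>
      rw [show 0 + 1 + (d + 1) = (d + 1) + 1 by omega]
      have e : T k ((d + 1) + 1) (0 + 1) = T k (d + 1) 0 + (k - 1) * T k (d + 1) (0 + 1) := by
        simp [T]
      rw [e]
      have h2 : T k (d + 1) (0 + 1) ≤ SS k 0 d := by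
        have h := ihd 0
        rw [show 0 + 1 + d = d + 1 by omega] at h
        exact h
      have expand : SS k 0 (d + 1) = k ^ (d + 1) + (k - 1) * SS k 0 d := by simp [SS]
      rw [expand]
      have h0 : T k (d + 1) 0 = k ^ (d + 1) := by simp [T]
      rw [h0]
      exact Nat.add_le_add_left (Nat.mul_le_mul_left _ h2) _
    | succ r ihr =>
      rw [show r + 1 + 1 + (d + 1) = (r + 1 + (d + 1)) + 1 by omega]
      have e : T k ((r + 1 + (d + 1)) + 1) ((r + 1) + 1)
          = T k (r + 1 + (d + 1)) (r + 1) + (k - 1) * T k (r + 1 + (d + 1)) ((r + 1) + 1) := by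
        simp [T]
      rw [e]
      have expand : SS k (r + 1) (d + 1) = SS k r (d + 1) + (k - 1) * SS k (r + 1) d := by
        simp [SS]
      rw [expand]
      have h2 : T k (r + 1 + (d + 1)) ((r + 1) + 1) ≤ SS k (r + 1) d := by
        have h := ihd (r + 1)
        rw [show r + 1 + 1 + d = r + 1 + (d + 1) by omega] at h
        exact h
      exact Nat.add_le_add ihr (Nat.mul_le_mul_left _ h2)

lemma cons_sublist_cons_ne {α : Type*} {x y : α} (h : x ≠ y) (c l : List α) :
    (x :: c).Sublist (y :: l) ↔ (x :: c).Sublist l := by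
  constructor
  · intro hs
    cases hs with
    | cons _ hs => exact hs
    | cons_cons _ hs => exact absurd rfl h
  · intro hs
    exact hs.cons y

open scoped Classical in
noncomputable def Ncnt (k n : ℕ) (c : List (Fin k)) : ℕ :=
  (Finset.univ.filter fun s : Fin n → Fin k => c.Sublist (List.ofFn s)).card

lemma Ncnt_le (k : ℕ) (hk : 1 ≤ k) : ∀ n (c : List (Fin k)), Ncnt k n c ≤ T k n c.length := by
  intro n
  induction n with
  | zero =>
    intro c
    cases c with
    | nil => simp [Ncnt, T]
    | cons x c =>
      have : (Finset.univ.filter fun s : Fin 0 → Fin k =>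
          (x :: c).Sublist (List.ofFn s)) = ∅ := by
        apply Finset.filter_false_of_mem
        intro s _
        simp
      simp [Ncnt, this]
  | succ n ih =>
    intro c
    cases c with
    | nil =>
      calc Ncnt k (n + 1) [] ≤ (Finset.univ : Finset (Fin (n + 1) → Fin k)).card :=
            Finset.card_filter_le _ _
        _ = k ^ (n + 1) := by simp [Finset.card_univ]
        _ = T k (n + 1) 0 := by simp [T]
    | cons x c =>
      classical
      have hfiber : Ncnt k (n + 1) (x :: c) =
          ∑ y : Fin k, (Finset.univ.filter fun s : Fin n → Fin k =>
            (x :: c).Sublist (y :: List.ofFn s)).card := by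
        rw [Ncnt, Finset.card_eq_sum_card_fiberwise
          (f := fun s : Fin (n + 1) → Fin k => s 0) (t := Finset.univ)
          (fun _ _ => Finset.mem_univ _)]
        apply Finset.sum_congr rfl
        intro y _
        rw [Finset.filter_filter]
        apply Finset.card_nbij' (i := fun s => Fin.tail s) (j := fun s' => Fin.cons y s')
        · intro s hs
          simp only [Finset.mem_coe, Finset.mem_filter, Finset.mem_univ, true_and] at hs ⊢
          obtain ⟨h1, h2⟩ := hs
          have : List.ofFn s = y :: List.ofFn (Fin.tail s) := by
            rw [List.ofFn_succ, h2]; rfl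
          rwa [this] at h1
        · intro s' hs'
          simp only [Finset.mem_coe, Finset.mem_filter, Finset.mem_univ, true_and] at hs' ⊢
          constructor
          · have : List.ofFn (Fin.cons y s' : Fin (n+1) → Fin k) = y :: List.ofFn s' := by
              rw [List.ofFn_succ]
              simp [Fin.tail]
            rwa [this]
          · simp
        · intro s hs
          simp only [Finset.mem_coe, Finset.mem_filter, Finset.mem_univ, true_and] at hs
          rw [← hs.2]
          exact (Fin.cons_self_tail s)
        · intro s' _
          simp
      rw [hfiber]
      have hbound : ∀ y : Fin k,
          (Finset.univ.filter fun s : Fin n → Fin k =>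
            (x :: c).Sublist (y :: List.ofFn s)).card ≤
          if y = x then T k n c.length else T k n (c.length + 1) := by
        intro y
        by_cases hxy : y = x
        · subst hxy
          rw [if_pos rfl]
          have : (Finset.univ.filter fun s : Fin n → Fin k =>
              (y :: c).Sublist (y :: List.ofFn s)) =
              (Finset.univ.filter fun s : Fin n → Fin k => c.Sublist (List.ofFn s)) := by
            apply Finset.filter_congr
            intro s _
            simp [List.cons_sublist_cons]
          rw [this]
          exact ih c
        · rw [if_neg hxy]
          have : (Finset.univ.filter fun s : Fin n → Fin k =>
              (x :: c).Sublist (y :: List.ofFn s)) =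
              (Finset.univ.filter fun s : Fin n → Fin k => (x :: c).Sublist (List.ofFn s)) := by
            apply Finset.filter_congr
            intro s _
            simp [cons_sublist_cons_ne (fun h => hxy h.symm)]
          rw [this]
          exact ih (x :: c)
      calc ∑ y : Fin k, (Finset.univ.filter fun s : Fin n → Fin k =>
              (x :: c).Sublist (y :: List.ofFn s)).card
          ≤ ∑ y : Fin k, (if y = x then T k n c.length else T k n (c.length + 1)) :=
            Finset.sum_le_sum (fun y _ => hbound y)
        _ = T k n c.length + (k - 1) * T k n (c.length + 1) := by
            rw [← Finset.add_sum_erase _ _ (Finset.mem_univ x), if_pos rfl]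
            congr 1
            rw [Finset.sum_congr rfl (fun y hy => if_neg (Finset.ne_of_mem_erase hy)),
              Finset.sum_const, Finset.card_erase_of_mem (Finset.mem_univ x),
              Finset.card_univ, Fintype.card_fin, smul_eq_mul]
        _ = T k (n + 1) (x :: c).length := by
            show _ = T k (n + 1) (c.length + 1)
            simp [T]


theorem stmt6 (n ℓ k m : ℕ) (hk : 2 ≤ k) (hm : 1 ≤ m) (hn : 1 ≤ n)
    (hθ1 : n ≤ ℓ * k) (hθ2 : ℓ < n) :
    ((Finset.univ.filter
        (fun a : Fin m → Fin n → Fin k => ℓ ≤ LC (fun i => List.ofFn (a i)))).card : ℝ) /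
        (k : ℝ) ^ (m * n) ≤
      (k : ℝ) ^ ℓ * ((n : ℝ) * (n.choose ℓ : ℝ) * ((k : ℝ) - 1) ^ (n - ℓ)) ^ m /
        (k : ℝ) ^ (m * n) := by
  classical
  have hk1 : 1 ≤ k := by omega
  have hl1 : 1 ≤ ℓ := by
    by_contra h
    have : ℓ = 0 := by omega
    subst this
    simp at hθ1
    omega
  set B := n * Nat.choose n ℓ * (k - 1) ^ (n - ℓ) with hB
  have hsingle : ∀ c : List (Fin k), c.length = ℓ → Ncnt k n c ≤ B := by
    intro c hc
    obtain ⟨r, hr⟩ : ∃ r, ℓ = r + 1 := ⟨ℓ - 1, by omega⟩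
    obtain ⟨d, hd⟩ : ∃ d, n = r + 1 + d := ⟨n - ℓ, by omega⟩
    have hcond : r + 1 + d ≤ k * (r + 1) := by
      rw [← hd, Nat.mul_comm, ← hr]
      exact hθ1
    have h1 : Ncnt k n c ≤ T k (r + 1 + d) (r + 1) := by
      rw [← hd]
      have := Ncnt_le k hk1 n c
      rwa [hc, hr] at this
    have h2 := T_le_SS k d r
    have h3 := SS_le k r d hk hcond
    have hBd : B = (r + 1 + d) * Nat.choose (r + 1 + d) (r + 1) * (k - 1) ^ d := by
      rw [hB, hd, hr]
      congr 2
      omega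
    rw [hBd]
    exact le_trans h1 (le_trans h2 h3)
  have htuple : ∀ dv : Fin ℓ → Fin k,
      (Finset.univ.filter fun a : Fin m → Fin n → Fin k =>
        ∀ i, (List.ofFn dv).Sublist (List.ofFn (a i))).card ≤ B ^ m := by
    intro dv
    have heq : (Finset.univ.filter fun a : Fin m → Fin n → Fin k =>
        ∀ i, (List.ofFn dv).Sublist (List.ofFn (a i))) =
        Fintype.piFinset (fun _ : Fin m =>
          Finset.univ.filter fun s : Fin n → Fin k => (List.ofFn dv).Sublist (List.ofFn s)) := by
      ext a
      simp [Fintype.mem_piFinset]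
    rw [heq, Fintype.card_piFinset, Finset.prod_const, Finset.card_univ, Fintype.card_fin]
    exact Nat.pow_le_pow_left (hsingle (List.ofFn dv) (by simp)) m
  have hsub : (Finset.univ.filter fun a : Fin m → Fin n → Fin k =>
      ℓ ≤ LC fun i => List.ofFn (a i)) ⊆
      Finset.univ.biUnion (fun dv : Fin ℓ → Fin k =>
        Finset.univ.filter fun a : Fin m → Fin n → Fin k =>
          ∀ i, (List.ofFn dv).Sublist (List.ofFn (a i))) := by
    intro a ha
    rw [Finset.mem_filter] at ha
    obtain ⟨-, hLC⟩ := ha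
    have hne : {l | ∃ c : List (Fin k), c.length = l ∧
        ∀ i, c.Sublist (List.ofFn (a i))}.Nonempty :=
      ⟨0, [], rfl, fun i => List.nil_sublist _⟩
    have hbdd : BddAbove {l | ∃ c : List (Fin k), c.length = l ∧
        ∀ i, c.Sublist (List.ofFn (a i))} := by
      refine ⟨n, fun l hl => ?_⟩
      obtain ⟨c, hcl, hcs⟩ := hl
      have := (hcs ⟨0, hm⟩).length_le
      rw [List.length_ofFn] at this
      omega
    have hmem := Nat.sSup_mem hne hbdd
    obtain ⟨c, hclen, hcsub⟩ := hmem
    have hlen : ℓ ≤ c.length := by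
      rw [hclen]
      exact hLC
    have hclen' : (c.take ℓ).length = ℓ := by
      rw [List.length_take]
      omega
    have hsub' : ∀ i, (c.take ℓ).Sublist (List.ofFn (a i)) :=
      fun i => (List.take_sublist ℓ c).trans (hcsub i)
    refine Finset.mem_biUnion.mpr
      ⟨fun j => (c.take ℓ).get (Fin.cast hclen'.symm j), Finset.mem_univ _, ?_⟩
    rw [Finset.mem_filter]
    refine ⟨Finset.mem_univ _, fun i => ?_⟩
    have hofn : List.ofFn (fun j : Fin ℓ => (c.take ℓ).get (Fin.cast hclen'.symm j)) = c.take ℓ := by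
      apply List.ext_get
      · simp [hclen']
      · intro i h1 h2
        simp
    rw [hofn]
    exact hsub' i
  have hnat : (Finset.univ.filter
      (fun a : Fin m → Fin n → Fin k => ℓ ≤ LC (fun i => List.ofFn (a i)))).card ≤
      k ^ ℓ * B ^ m := by
    calc (Finset.univ.filter
        (fun a : Fin m → Fin n → Fin k => ℓ ≤ LC (fun i => List.ofFn (a i)))).card
        ≤ (Finset.univ.biUnion (fun dv : Fin ℓ → Fin k =>
            Finset.univ.filter fun a : Fin m → Fin n → Fin k =>
              ∀ i, (List.ofFn dv).Sublist (List.ofFn (a i)))).card :=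
          Finset.card_le_card hsub
      _ ≤ ∑ dv : Fin ℓ → Fin k,
            (Finset.univ.filter fun a : Fin m → Fin n → Fin k =>
              ∀ i, (List.ofFn dv).Sublist (List.ofFn (a i))).card :=
          Finset.card_biUnion_le
      _ ≤ ∑ _dv : Fin ℓ → Fin k, B ^ m := Finset.sum_le_sum (fun dv _ => htuple dv)
      _ = k ^ ℓ * B ^ m := by
          rw [Finset.sum_const, Finset.card_univ, smul_eq_mul]
          congr 1
          simp [Fintype.card_fun]
  have hkpos : (0 : ℝ) < (k : ℝ) ^ (m * n) := by positivity
  gcongr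
  have hcast : ((k : ℝ) - 1) = ((k - 1 : ℕ) : ℝ) := by
    rw [Nat.cast_sub hk1, Nat.cast_one]
  rw [hcast]
  exact_mod_cast hnat
end
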